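/- arXiv:1605.05490 — 4 statements merged into one kernel-verified Lean document; each statement's English description precedes it below -/
import Mathlib

section
/- For every n ≥ 2, the number of indecomposable permutations of {1,...,n} that avoid the pattern 213 equals C_n − C_{n−1}, where C_n is the n-th Catalan number. -/
/-!
In a 213-avoiding permutation every entry left of the minimum exceeds every entry right of
it, since otherwise those two entries and the minimum form a 213. Hence a 213-avoider is the
skew sum `σ ⊖ ρ` of two 213-avoiders, where `ρ` starts with its minimum, i.e. `ρ = 1 ⊕ τ`;
this gives the Catalan recurrence. If a 213-avoider `π` maps `{0, …, i - 1}` onto itself but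
`π 0 ≠ 0`, then `π 0`, the minimum and the entry `i` form a 213; so the decomposable
213-avoiders are exactly the `1 ⊕ τ`, counted by `C (n - 1)`.
-/
open Equiv Finset

def Avoids213 {α β : Type*} [LT α] [LT β] (f : α → β) : Prop :=
  ¬ ∃ a b c, a < b ∧ b < c ∧ f b < f a ∧ f a < f c

section Avoids213

variable {α β γ : Type*}

theorem Avoids213.comp [Preorder α] [Preorder β] [LT γ] {f : β → γ} {g : α → β}
    (hf : Avoids213 f) (hg : StrictMono g) : Avoids213 (f ∘ g) := by
  rintro ⟨a, b, c, hab, hbc, hba, hac⟩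
  exact hf ⟨g a, g b, g c, hg hab, hg hbc, hba, hac⟩

theorem StrictMono.avoids213_comp_iff [LT α] [LinearOrder β] [Preorder γ] {f : α → β}
    {h : β → γ} (hh : StrictMono h) : Avoids213 (h ∘ f) ↔ Avoids213 f := by
  simp only [Avoids213, Function.comp_apply, hh.lt_iff_lt]

end Avoids213

/-- The skew sum `σ ⊖ ρ`: `σ` on the first `a` positions, shifted to the top `a` values,
followed by `ρ` on the bottom `b` values. -/
def skewSum {a b : ℕ} (σ : Perm (Fin a)) (ρ : Perm (Fin b)) : Perm (Fin (a + b)) :=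
  finSumFinEquiv.symm.trans <| (σ.sumCongr ρ).trans <| (sumComm _ _).trans <|
    finSumFinEquiv.trans (finCongr (Nat.add_comm b a))

theorem Fin.castAdd_lt_natAdd {a b : ℕ} (i : Fin a) (j : Fin b) :
    Fin.castAdd b i < Fin.natAdd a j := by
  rw [Fin.lt_def, Fin.val_castAdd, Fin.val_natAdd]; omega

section skewSum

variable {a b : ℕ} (σ : Perm (Fin a)) (ρ : Perm (Fin b))

@[simp]
theorem val_skewSum_castAdd (i : Fin a) : (skewSum σ ρ (Fin.castAdd b i) : ℕ) = b + σ i := by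
  simp [skewSum, add_comm]

@[simp]
theorem val_skewSum_natAdd (j : Fin b) : (skewSum σ ρ (Fin.natAdd a j) : ℕ) = ρ j := by
  simp [skewSum]

theorem skewSum_comp_castAdd :
    skewSum σ ρ ∘ Fin.castAdd b = Fin.cast (Nat.add_comm b a) ∘ Fin.natAdd b ∘ σ := by
  ext i; simp [add_comm]

theorem skewSum_comp_natAdd :
    skewSum σ ρ ∘ Fin.natAdd a = Fin.cast (Nat.add_comm b a) ∘ Fin.castAdd a ∘ ρ := by
  ext j; simp

theorem skewSum_natAdd_lt_castAdd (i : Fin a) (j : Fin b) :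
    skewSum σ ρ (Fin.natAdd a j) < skewSum σ ρ (Fin.castAdd b i) := by
  rw [Fin.lt_def, val_skewSum_natAdd, val_skewSum_castAdd]; omega

theorem skewSum_castAdd_lt_castAdd_iff (i j : Fin a) :
    skewSum σ ρ (Fin.castAdd b i) < skewSum σ ρ (Fin.castAdd b j) ↔ σ i < σ j := by
  simp only [Fin.lt_def, val_skewSum_castAdd, Nat.add_lt_add_iff_left]

theorem skewSum_natAdd_lt_natAdd_iff (i j : Fin b) :
    skewSum σ ρ (Fin.natAdd a i) < skewSum σ ρ (Fin.natAdd a j) ↔ ρ i < ρ j := by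
  simp only [Fin.lt_def, val_skewSum_natAdd]

theorem skewSum_injective :
    Function.Injective fun p : Perm (Fin a) × Perm (Fin b) ↦ skewSum p.1 p.2 := by
  rintro ⟨σ, ρ⟩ ⟨σ', ρ'⟩ h
  simp only at h
  ext i
  · simpa using congr_arg (fun π : Perm (Fin (a + b)) ↦ (π (Fin.castAdd b i) : ℕ)) h
  · simpa using congr_arg (fun π : Perm (Fin (a + b)) ↦ (π (Fin.natAdd a i) : ℕ)) h

theorem avoids213_skewSum_iff : Avoids213 (skewSum σ ρ) ↔ Avoids213 σ ∧ Avoids213 ρ := by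
  refine ⟨fun h ↦ ⟨?_, ?_⟩, fun ⟨hσ, hρ⟩ ↦ ?_⟩
  · have := h.comp (Fin.strictMono_castAdd b)
    rw [skewSum_comp_castAdd, ← Function.comp_assoc] at this
    exact ((Fin.cast_strictMono _).comp (Fin.strictMono_natAdd b)).avoids213_comp_iff.mp this
  · have := h.comp (Fin.strictMono_natAdd a)
    rw [skewSum_comp_natAdd, ← Function.comp_assoc] at this
    exact ((Fin.cast_strictMono _).comp (Fin.strictMono_castAdd a)).avoids213_comp_iff.mp this
  · rintro ⟨x, y, z, hxy, hyz, hyx, hxz⟩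
    induction x using Fin.addCases with
    | left i =>
      induction z using Fin.addCases with
      | right k => exact (skewSum_natAdd_lt_castAdd σ ρ i k).not_gt hxz
      | left k =>
        induction y using Fin.addCases with
        | left j =>
          simp only [(Fin.strictMono_castAdd b).lt_iff_lt,
            skewSum_castAdd_lt_castAdd_iff] at hxy hyz hyx hxz
          exact hσ ⟨i, j, k, hxy, hyz, hyx, hxz⟩
        | right j => exact absurd hyz (Fin.castAdd_lt_natAdd k j).not_gt
    | right i =>
      induction y using Fin.addCases with
      | left j => exact absurd hxy (Fin.castAdd_lt_natAdd j i).not_gt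
      | right j =>
        induction z using Fin.addCases with
        | left k => exact absurd hyz (Fin.castAdd_lt_natAdd k j).not_gt
        | right k =>
          simp only [(Fin.strictMono_natAdd a).lt_iff_lt,
            skewSum_natAdd_lt_natAdd_iff] at hxy hyz hyx hxz
          exact hρ ⟨i, j, k, hxy, hyz, hyx, hxz⟩

end skewSum

theorem exists_skewSum_eq_of_forall_le {a b : ℕ} {π : Perm (Fin (a + b))}
    (h : ∀ i, b ≤ (π (Fin.castAdd b i) : ℕ)) : ∃ σ ρ, skewSum σ ρ = π := by
  set E : Fin b ⊕ Fin a ≃ Fin (a + b) := finSumFinEquiv.trans (finCongr (Nat.add_comm b a))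
  -- `π` in block coordinates; `π = σ ⊖ ρ` says exactly that `ψ = σ.sumCongr ρ`.
  set ψ : Perm (Fin a ⊕ Fin b) := finSumFinEquiv.trans (π.trans (E.symm.trans (sumComm _ _)))
  have hψ : Set.MapsTo ψ (Set.range Sum.inl) (Set.range Sum.inl) := by
    rintro _ ⟨i, rfl⟩
    have hi := h i
    have hk : Fin.cast (Nat.add_comm a b) (π (Fin.castAdd b i)) =
        Fin.natAdd b ⟨π (Fin.castAdd b i) - b, by omega⟩ :=
      Fin.ext (by simp only [Fin.val_cast, Fin.val_natAdd]; omega)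
    refine ⟨⟨π (Fin.castAdd b i) - b, by omega⟩, ?_⟩
    simp only [ψ, E, trans_apply, symm_trans_apply, finSumFinEquiv_apply_left, finCongr_symm,
      finCongr_apply, hk, finSumFinEquiv_symm_apply_natAdd, sumComm_apply, Sum.swap_inr]
  obtain ⟨⟨σ, ρ⟩, hσρ⟩ := Perm.mem_sumCongrHom_range_of_perm_mapsTo_inl hψ
  refine ⟨σ, ρ, Equiv.ext fun x ↦ ?_⟩
  rw [Perm.sumCongrHom_apply] at hσρ
  simp [skewSum, hσρ, ψ, E]

theorem card_le_of_injective_of_forall_lt {ι : Type*} [Fintype ι] {N : ℕ} {f : ι → Fin N}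
    (hf : Function.Injective f) {v : Fin N} (h : ∀ j, f j < v) : Fintype.card ι ≤ v := by
  have := card_le_card_of_injOn (s := univ) f (fun j _ ↦ mem_Iio.2 (h j)) hf.injOn
  rwa [card_univ, Fin.card_Iio] at this

theorem Avoids213.exists_skewSum_eq {a b : ℕ} {π : Perm (Fin (a + (b + 1)))}
    (hπ : Avoids213 π) (h0 : π (Fin.natAdd a 0) = 0) : ∃ σ ρ, skewSum σ ρ = π := by
  have hcross : ∀ i j, π (Fin.natAdd a j) < π (Fin.castAdd (b + 1) i) := by
    intro i j
    have hi : π (Fin.castAdd (b + 1) i) ≠ 0 := by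
      rw [← h0]; exact π.injective.ne (Fin.castAdd_lt_natAdd i 0).ne
    by_contra hle
    have hlt := lt_of_le_of_ne (not_lt.mp hle) (π.injective.ne (Fin.castAdd_lt_natAdd i j).ne)
    have hj : j ≠ 0 := by rintro rfl; simp [h0] at hlt
    exact hπ ⟨_, _, _, Fin.castAdd_lt_natAdd i 0,
      Fin.strictMono_natAdd a (Fin.pos_iff_ne_zero.mpr hj),
      h0 ▸ Fin.pos_iff_ne_zero.mpr hi, hlt⟩
  exact exists_skewSum_eq_of_forall_le fun i ↦ by
    simpa using card_le_of_injective_of_forall_lt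
      (π.injective.comp (Fin.natAdd_injective _ a)) (hcross i)

open scoped Classical

noncomputable def avoiders (n : ℕ) : Finset (Perm (Fin n)) := {π | Avoids213 π}

theorem card_avoiders_filter_natAdd_zero (a b : ℕ) :
    #{π ∈ avoiders (a + (b + 1)) | π (Fin.natAdd a 0) = 0} =
      #(avoiders a) * #{ρ ∈ avoiders (b + 1) | ρ 0 = 0} := by
  rw [← card_product]
  symm
  refine card_nbij (fun p ↦ skewSum p.1 p.2) ?_ skewSum_injective.injOn ?_
  · rintro ⟨σ, ρ⟩ h
    simp only [coe_product, Set.mem_prod, mem_coe, avoiders, mem_filter, mem_univ,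
      true_and] at h ⊢
    exact ⟨(avoids213_skewSum_iff σ ρ).2 ⟨h.1, h.2.1⟩, Fin.ext (by simp [h.2.2])⟩
  · intro π h
    simp only [mem_coe, avoiders, mem_filter, mem_univ, true_and] at h
    obtain ⟨σ, ρ, rfl⟩ := h.1.exists_skewSum_eq h.2
    refine ⟨(σ, ρ), ?_, rfl⟩
    have h0 := congr_arg Fin.val h.2
    simp only [val_skewSum_natAdd, Fin.val_zero] at h0
    simp only [coe_product, Set.mem_prod, mem_coe, avoiders, mem_filter, mem_univ, true_and]
    obtain ⟨hσ, hρ⟩ := (avoids213_skewSum_iff σ ρ).1 h.1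
    exact ⟨hσ, hρ, Fin.ext h0⟩

section decomposeFin

open Equiv.Perm

/-! `decomposeFin.symm (0, τ)` is the permutation `1 ⊕ τ`: it fixes `0` and acts as `τ`
above it. -/

variable {n : ℕ} (τ : Perm (Fin n))

@[simp]
theorem decomposeFin_symm_zero_apply_succ (x : Fin n) :
    decomposeFin.symm (0, τ) x.succ = (τ x).succ := by
  simp [decomposeFin_symm_apply_succ]

theorem avoids213_decomposeFin_symm_zero_iff :
    Avoids213 (decomposeFin.symm (0, τ)) ↔ Avoids213 τ := by
  refine ⟨fun h ↦ ?_, fun h ↦ ?_⟩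
  · have := h.comp Fin.strictMono_succ
    have hc : decomposeFin.symm (0, τ) ∘ Fin.succ = Fin.succ ∘ τ := by ext x; simp
    rw [hc] at this
    exact Fin.strictMono_succ.avoids213_comp_iff.mp this
  · rintro ⟨x, y, z, hxy, hyz, hyx, hxz⟩
    induction x using Fin.cases with
    | zero => simp at hyx
    | succ x =>
      induction y using Fin.cases with
      | zero => exact absurd hxy (Fin.not_lt_zero _)
      | succ y =>
        induction z using Fin.cases with
        | zero => exact absurd hyz (Fin.not_lt_zero _)
        | succ z =>
          simp only [Fin.succ_lt_succ_iff, decomposeFin_symm_zero_apply_succ] at hxy hyz hyx hxz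
          exact h ⟨x, y, z, hxy, hyz, hyx, hxz⟩

end decomposeFin

theorem card_avoiders_filter_zero (n : ℕ) :
    #{ρ ∈ avoiders (n + 1) | ρ 0 = 0} = #(avoiders n) := by
  symm
  refine card_nbij (fun τ ↦ Perm.decomposeFin.symm (0, τ)) ?_ ?_ ?_
  · intro τ h
    simp only [mem_coe, avoiders, mem_filter, mem_univ, true_and] at h ⊢
    exact ⟨(avoids213_decomposeFin_symm_zero_iff τ).2 h,
      Perm.decomposeFin_symm_apply_zero 0 τ⟩
  · intro τ _ τ' _ h
    simpa using Perm.decomposeFin.symm.injective h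
  · intro ρ h
    simp only [mem_coe, avoiders, mem_filter, mem_univ, true_and] at h
    have hρ : Perm.decomposeFin.symm (0, (Perm.decomposeFin ρ).2) = ρ := by
      have h0 := Perm.decomposeFin_symm_apply_zero (Perm.decomposeFin ρ).1 (Perm.decomposeFin ρ).2
      rw [Prod.mk.eta, symm_apply_apply, h.2] at h0
      rw [h0, Prod.mk.eta, symm_apply_apply]
    refine ⟨(Perm.decomposeFin ρ).2, ?_, hρ⟩
    rw [mem_coe, avoiders, mem_filter, ← avoids213_decomposeFin_symm_zero_iff, hρ]
    exact ⟨mem_univ _, h.1⟩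

theorem card_avoiders (n : ℕ) : #(avoiders n) = catalan n := by
  induction n using Nat.strong_induction_on with
  | _ n ih =>
    cases n with
    | zero =>
      have : avoiders 0 = univ := filter_true_of_mem fun _ _ ⟨x, _⟩ ↦ x.elim0
      simp [this]
    | succ n =>
      rw [catalan_succ, card_eq_sum_card_fiberwise (f := fun π ↦ π.symm 0) (t := univ)
        (fun _ _ ↦ mem_coe.2 (mem_univ _))]
      refine sum_congr rfl fun ⟨a, ha⟩ _ ↦ ?_
      obtain ⟨b, rfl⟩ := Nat.exists_eq_add_of_le (Nat.lt_succ_iff.mp ha)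
      simp only [symm_apply_eq, eq_comm (a := (0 : Fin _))]
      rw [Nat.add_sub_cancel_left, ← ih a (by omega), ← ih b (by omega),
        ← card_avoiders_filter_zero b]
      exact card_avoiders_filter_natAdd_zero a b

def IsDecomposable {n : ℕ} (π : Perm (Fin n)) : Prop :=
  ∃ i : ℕ, 0 < i ∧ i < n ∧ ∀ a : Fin n, a.val < i ↔ (π a).val < i

theorem Avoids213.map_zero_of_isDecomposable {n : ℕ} {π : Perm (Fin (n + 1))}
    (hπ : Avoids213 π) (hd : IsDecomposable π) : π 0 = 0 := by
  obtain ⟨i, hi0, hin, hi⟩ := hd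
  by_contra h0
  have hb : (π.symm 0 : ℕ) < i := (hi _).2 (by simpa using hi0)
  have hb0 : 0 < π.symm 0 := by
    rw [Fin.pos_iff_ne_zero, Ne, symm_apply_eq, eq_comm]; exact h0
  have hc : i ≤ (π.symm ⟨i, hin⟩ : ℕ) := by
    rw [← not_lt, hi, apply_symm_apply]; exact lt_irrefl i
  exact hπ ⟨0, π.symm 0, π.symm ⟨i, hin⟩, hb0, Fin.lt_def.2 (by omega),
    by simpa [Fin.pos_iff_ne_zero] using h0,
    by rw [apply_symm_apply, Fin.lt_def]; exact (hi 0).1 hi0⟩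

theorem isDecomposable_of_map_zero {n : ℕ} (hn : 0 < n) {π : Perm (Fin (n + 1))}
    (h0 : π 0 = 0) : IsDecomposable π := by
  refine ⟨1, one_pos, by omega, fun a ↦ ?_⟩
  simp only [Nat.lt_one_iff, Fin.val_eq_zero_iff]
  rw [← π.injective.eq_iff, h0]

/-- For n ≥ 2, the number of indecomposable 213-avoiding permutations
of {1,...,n} is Cₙ - Cₙ₋₁. -/
theorem stmt3 (n : ℕ) (hn : 2 ≤ n) :
    Nat.card {π : Equiv.Perm (Fin n) //
      (¬ ∃ i : ℕ, 0 < i ∧ i < n ∧ ∀ a : Fin n, a.val < i ↔ (π a).val < i) ∧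
      ¬ ∃ a b c : Fin n, a < b ∧ b < c ∧ π b < π a ∧ π a < π c} =
    catalan n - catalan (n - 1) := by
  obtain ⟨m, rfl⟩ : ∃ m, n = m + 1 := ⟨n - 1, by omega⟩
  have hset : ({π | ¬IsDecomposable π ∧ Avoids213 π} : Finset (Perm (Fin (m + 1)))) =
      avoiders (m + 1) \ {π ∈ avoiders (m + 1) | π 0 = 0} := by
    ext π
    simp only [avoiders, mem_sdiff, mem_filter, mem_univ, true_and]
    constructor
    · rintro ⟨hd, hπ⟩
      exact ⟨hπ, fun ⟨_, h0⟩ ↦ hd (isDecomposable_of_map_zero (by omega) h0)⟩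
    · rintro ⟨hπ, h0⟩
      exact ⟨fun hd ↦ h0 ⟨hπ, hπ.map_zero_of_isDecomposable hd⟩, hπ⟩
  change Nat.card {π : Perm (Fin (m + 1)) // ¬IsDecomposable π ∧ Avoids213 π} = _
  rw [Nat.card_eq_fintype_card, Fintype.card_subtype, hset,
    card_sdiff_of_subset (filter_subset _ _), card_avoiders_filter_zero, card_avoiders,
    card_avoiders, Nat.add_sub_cancel]
end

section
/- Let π be a permutation of {1,...,n} that is decomposable with first component π^(1) = π(1)⋯π(i), i = i_π < n. Then π avoids the pattern 3214 if and only if π^(1) avoids the pattern 321 and the suffix π(i+1)⋯π(n) avoids 3214. -/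
/-!
Split a 3214 occurrence `a < b < c < d` by the position of its `1`. If `c < i`, its `321`
part lies in the first component; conversely a `321` there extends to a `3214` by the entry
at position `i`, since `π` maps the first `i` positions onto the `i` smallest values. If
`c ≥ i`, then `π a > π c ≥ i` forces `a ≥ i`, so the occurrence lies in the suffix.
-/

section BlockPrefix

variable {n i : ℕ} {π : Equiv.Perm (Fin n)}

theorem Equiv.Perm.val_apply_lt_of_val_lt_of_blockPrefix
    (hcut : ∀ a : Fin n, a.val < i ↔ (π a).val < i) {a d : Fin n}
    (ha : a.val < i) (hd : i ≤ d.val) : π a < π d :=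
  Fin.lt_def.mpr <| lt_of_lt_of_le ((hcut a).mp ha) (not_lt.mp fun h => hd.not_gt ((hcut d).mpr h))

theorem Equiv.Perm.le_val_of_apply_lt_of_blockPrefix
    (hcut : ∀ a : Fin n, a.val < i ↔ (π a).val < i) {a c : Fin n}
    (hc : i ≤ c.val) (hca : π c < π a) : i ≤ a.val :=
  not_lt.mp fun ha => hc.not_gt <| (hcut c).mpr (lt_trans (Fin.lt_def.mp hca) ((hcut a).mp ha))

end BlockPrefix

theorem stmt7_general (n i : ℕ) (π : Equiv.Perm (Fin n))
    (hin : i < n)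
    (hcut : ∀ a : Fin n, a.val < i ↔ (π a).val < i) :
    (¬ ∃ a b c d : Fin n, a < b ∧ b < c ∧ c < d ∧
        π c < π b ∧ π b < π a ∧ π a < π d) ↔
    ((¬ ∃ a b c : Fin n, a < b ∧ b < c ∧ c.val < i ∧ π c < π b ∧ π b < π a) ∧
      ¬ ∃ a b c d : Fin n, i ≤ a.val ∧ a < b ∧ b < c ∧ c < d ∧
        π c < π b ∧ π b < π a ∧ π a < π d) := by
  constructor
  · intro h
    refine ⟨?_, ?_⟩
    · rintro ⟨a, b, c, hab, hbc, hci, hcb, hba⟩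
      have hai : a.val < i := (Fin.lt_def.mp (hab.trans hbc)).trans hci
      exact h ⟨a, b, c, ⟨i, hin⟩, hab, hbc, hci, hcb, hba,
        π.val_apply_lt_of_val_lt_of_blockPrefix hcut hai le_rfl⟩
    · rintro ⟨a, b, c, d, -, hab, hbc, hcd, hcb, hba, had⟩
      exact h ⟨a, b, c, d, hab, hbc, hcd, hcb, hba, had⟩
  · rintro ⟨h321, h3214⟩ ⟨a, b, c, d, hab, hbc, hcd, hcb, hba, had⟩
    rcases lt_or_ge c.val i with hci | hic
    · exact h321 ⟨a, b, c, hab, hbc, hci, hcb, hba⟩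
    · exact h3214 ⟨a, b, c, d, π.le_val_of_apply_lt_of_blockPrefix hcut hic (hcb.trans hba),
        hab, hbc, hcd, hcb, hba, had⟩

/-- A decomposable permutation with first component of length i avoids
3214 iff the first component avoids 321 and the suffix avoids 3214. -/
theorem stmt7 (n i : ℕ) (π : Equiv.Perm (Fin n))
    (hi0 : 0 < i) (hin : i < n)
    (hcut : ∀ a : Fin n, a.val < i ↔ (π a).val < i)
    (hmin : ∀ j : ℕ, 0 < j → j < i → ¬ ∀ a : Fin n, a.val < j ↔ (π a).val < j) :
    (¬ ∃ a b c d : Fin n, a < b ∧ b < c ∧ c < d ∧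
        π c < π b ∧ π b < π a ∧ π a < π d) ↔
    ((¬ ∃ a b c : Fin n, a < b ∧ b < c ∧ c.val < i ∧ π c < π b ∧ π b < π a) ∧
      ¬ ∃ a b c d : Fin n, i ≤ a.val ∧ a < b ∧ b < c ∧ c < d ∧
        π c < π b ∧ π b < π a ∧ π a < π d) :=
  stmt7_general n i π hin hcut
end

section
/- Let π be a decomposable permutation of {1,...,n} with first component π^(1) = π(1)⋯π(i), i = i_π < n. Then π avoids the vincular pattern 1-32 (no indices a < b with π(a) < π(b+1) < π(b)) if and only if π^(1) avoids the vincular pattern 1-32 and π(i+1)⋯π(n) is the increasing sequence (i+1)(i+2)⋯n. -/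
/-!
All entries in positions `≥ i` are `≥ i`, while the first entry is `< i`. So a descent
`π b > π (b + 1)` with `b ≥ i`, preceded by the first entry, is an occurrence of 1-32: if `π`
avoids 1-32 its tail is increasing, and an increasing self-map of `{i, …, n - 1}` is the
identity. Conversely, if the tail is fixed, the adjacent pair `32` of an occurrence can neither
lie in the tail (which is increasing) nor straddle position `i` (entries before it are `< i`),
so the occurrence lies in the first component.
-/

section TailMonotone

variable {m i : ℕ} {f : Fin (m + 1) → Fin (m + 1)}

theorem le_apply_of_lt_apply_succ (hge : ∀ a : Fin (m + 1), i ≤ a.val → i ≤ (f a).val)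
    (hstep : ∀ k : Fin m, i ≤ k.val → f k.castSucc < f k.succ) (a : Fin (m + 1))
    (ha : i ≤ a.val) : a ≤ f a := by
  induction a using Fin.induction with
  | zero => exact Fin.zero_le _
  | succ k ih =>
    rcases Nat.lt_or_ge k.val i with hk | hk
    · have hki : k.succ.val = i := by simp only [Fin.val_succ] at ha ⊢; omega
      exact Fin.le_def.mpr (hki ▸ hge _ ha)
    · exact Fin.castSucc_lt_iff_succ_le.mp ((ih hk).trans_lt (hstep k hk))

theorem apply_le_of_lt_apply_succ
    (hstep : ∀ k : Fin m, i ≤ k.val → f k.castSucc < f k.succ) (a : Fin (m + 1))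
    (ha : i ≤ a.val) : f a ≤ a := by
  induction a using Fin.reverseInduction with
  | last => exact Fin.le_last _
  | cast k ih =>
    have hk : i ≤ k.val := ha
    have hsucc := ih (by simp only [Fin.val_succ]; omega)
    exact Fin.le_castSucc_iff.mpr ((hstep k hk).trans_le hsucc)

end TailMonotone

theorem apply_eq_self_of_lt_apply_succ {n i : ℕ} {f : Fin n → Fin n}
    (hge : ∀ a : Fin n, i ≤ a.val → i ≤ (f a).val)
    (hstep : ∀ b c : Fin n, i ≤ b.val → c.val = b.val + 1 → f b < f c) (a : Fin n)
    (ha : i ≤ a.val) : f a = a := by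
  cases n with
  | zero => exact a.elim0
  | succ m =>
    have hstep' : ∀ k : Fin m, i ≤ k.val → f k.castSucc < f k.succ :=
      fun k hk => hstep _ _ hk (by simp)
    exact le_antisymm (apply_le_of_lt_apply_succ hstep' a ha)
      (le_apply_of_lt_apply_succ hge hstep' a ha)

section Decomposable

variable {n i : ℕ} {π : Equiv.Perm (Fin n)}

theorem le_val_apply_of_le_val (hcut : ∀ a : Fin n, a.val < i ↔ (π a).val < i) (a : Fin n)
    (ha : i ≤ a.val) : i ≤ (π a).val :=
  not_lt.mp fun h => (not_lt.mpr ha) ((hcut a).mpr h)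

theorem lt_apply_of_avoids (hi0 : 0 < i) (hcut : ∀ a : Fin n, a.val < i ↔ (π a).val < i)
    (havoid : ¬ ∃ a b c : Fin n, a < b ∧ c.val = b.val + 1 ∧ π a < π c ∧ π c < π b)
    (b c : Fin n) (hb : i ≤ b.val) (hc : c.val = b.val + 1) : π b < π c := by
  by_contra! hcb
  have hne : π c ≠ π b := fun h => by
    have := congrArg Fin.val (π.injective h)
    omega
  let a₀ : Fin n := ⟨0, by omega⟩
  have ha₀ : (π a₀).val < i := (hcut a₀).mp hi0
  have hci : i ≤ (π c).val := le_val_apply_of_le_val hcut c (by omega)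
  exact havoid ⟨a₀, b, c, Fin.lt_def.mpr (by simp only [a₀]; omega), hc,
    Fin.lt_def.mpr (by omega), lt_of_le_of_ne hcb hne⟩

theorem val_lt_of_apply_succ_lt (hcut : ∀ a : Fin n, a.val < i ↔ (π a).val < i)
    (hfix : ∀ a : Fin n, i ≤ a.val → π a = a) {b c : Fin n} (hc : c.val = b.val + 1)
    (hcb : π c < π b) : c.val < i := by
  by_contra! hci
  rw [hfix c hci, Fin.lt_def] at hcb
  rcases Nat.lt_or_ge b.val i with hbi | hbi
  · have := (hcut b).mp hbi
    omega
  · rw [hfix b hbi] at hcb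
    omega

end Decomposable

theorem stmt14_general (n i : ℕ) (π : Equiv.Perm (Fin n))
    (hi0 : 0 < i)
    (hcut : ∀ a : Fin n, a.val < i ↔ (π a).val < i) :
    (¬ ∃ a b c : Fin n, a < b ∧ c.val = b.val + 1 ∧ π a < π c ∧ π c < π b) ↔
    ((¬ ∃ a b c : Fin n, a < b ∧ c.val = b.val + 1 ∧ c.val < i ∧
        π a < π c ∧ π c < π b) ∧
      ∀ a : Fin n, i ≤ a.val → π a = a) := by
  constructor
  · intro havoid
    refine ⟨fun ⟨a, b, c, hab, hc, _, hac, hcb⟩ => havoid ⟨a, b, c, hab, hc, hac, hcb⟩, ?_⟩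
    exact apply_eq_self_of_lt_apply_succ (le_val_apply_of_le_val hcut)
      (lt_apply_of_avoids hi0 hcut havoid)
  · rintro ⟨havoid, hfix⟩ ⟨a, b, c, hab, hc, hac, hcb⟩
    exact havoid ⟨a, b, c, hab, hc, val_lt_of_apply_succ_lt hcut hfix hc hcb, hac, hcb⟩

/-- A decomposable permutation with first component of length i avoids
the vincular pattern 1-32 iff the first component avoids 1-32 and the suffix is the
increasing sequence (i+1)(i+2)⋯n. -/
theorem stmt14 (n i : ℕ) (π : Equiv.Perm (Fin n))
    (hi0 : 0 < i) (hin : i < n)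
    (hcut : ∀ a : Fin n, a.val < i ↔ (π a).val < i)
    (hmin : ∀ j : ℕ, 0 < j → j < i → ¬ ∀ a : Fin n, a.val < j ↔ (π a).val < j) :
    (¬ ∃ a b c : Fin n, a < b ∧ c.val = b.val + 1 ∧ π a < π c ∧ π c < π b) ↔
    ((¬ ∃ a b c : Fin n, a < b ∧ c.val = b.val + 1 ∧ c.val < i ∧
        π a < π c ∧ π c < π b) ∧
      ∀ a : Fin n, i ≤ a.val → π a = a) :=
  stmt14_general n i π hi0 hcut
end

section
/- For every n ≥ 2, the number of indecomposable permutations of {1,...,n} avoiding the vincular pattern 1-32 equals the number of permutations of {1,...,n} avoiding the vincular pattern 1-32 whose last two entries form a rise, i.e., π(n−1) < π(n). -/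
/-!
Among permutations of `Fin (m + 1)` avoiding `1-32`, being decomposable is the same as ending
with the maximal value: if the maximum sits at a position `j` other than the last one, then for any
splitting point `i ≤ j` the entry after position `j` lies above the first block but below the
maximum, and together with the minimum (which lies in the first block) it forms an occurrence.
Likewise, ending with a rise is the same as not ending with the minimal value, since a descent
`π(n-1) > π(n) > min` is an occurrence together with the minimum. Finally, adding `1` to every
value cyclically (`finRotate`) is a bijection between avoiders ending with the maximum and
avoiders ending with the minimum, so their complements among avoiders have the same size.
-/

open Fin

namespace Equiv.Perm

variable {n m : ℕ}

def Contains1Dash32 (π : Perm (Fin n)) : Prop :=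
  ∃ a b c : Fin n, a < b ∧ c.val = b.val + 1 ∧ π a < π c ∧ π c < π b

def IsDecomposable (π : Perm (Fin n)) : Prop :=
  ∃ i : ℕ, 0 < i ∧ i < n ∧ ∀ a : Fin n, a.val < i ↔ (π a).val < i

theorem apply_ne_last_of_ne_last {π : Perm (Fin (m + 1))} (h : π (last m) = last m)
    {a : Fin (m + 1)} (ha : a ≠ last m) : π a ≠ last m :=
  fun hπa => ha (π.injective (hπa.trans h.symm))

theorem isDecomposable_of_apply_last_eq_last {π : Perm (Fin (m + 1))} (hm : 0 < m)
    (h : π (last m) = last m) : π.IsDecomposable := by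
  refine ⟨m, hm, m.lt_succ_self, fun a => ?_⟩
  have key : a ≠ last m ↔ π a ≠ last m :=
    ⟨apply_ne_last_of_ne_last h, fun hπa ha => hπa (ha ▸ h)⟩
  have hval : ∀ b : Fin (m + 1), b.val < m ↔ b ≠ last m := fun b => by
    rw [← lt_last_iff_ne_last, Fin.lt_def, val_last]
  rw [hval, hval]
  exact key

theorem contains1Dash32_of_isDecomposable {π : Perm (Fin (m + 1))} (hd : π.IsDecomposable)
    (h : π (last m) ≠ last m) : π.Contains1Dash32 := by
  obtain ⟨i, hi0, him, hblock⟩ := hd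
  set j := π.symm (last m)
  have hπj : π j = last m := π.apply_symm_apply _
  have hjm : j.val < m := val_lt_last fun hjl => h (hjl ▸ hπj)
  have hij : i ≤ j.val := by
    by_contra hlt
    have := (hblock j).mp (by omega)
    rw [hπj, val_last] at this
    omega
  set c : Fin (m + 1) := ⟨j.val + 1, by omega⟩
  have hπc : i ≤ (π c).val := by
    by_contra hlt
    have : j.val + 1 < i := (hblock c).mpr (by omega)
    omega
  have hπc_ne : π c ≠ last m := fun hc => by
    have := congrArg Fin.val (π.injective (hc.trans hπj.symm))
    simp [c] at this
  refine ⟨π.symm 0, j, c, ?_, rfl, ?_, ?_⟩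
  · have := (hblock (π.symm 0)).mpr (by simpa using hi0)
    rw [Fin.lt_def]
    omega
  · rw [apply_symm_apply, Fin.lt_def, val_zero]
    omega
  · rwa [hπj, lt_last_iff_ne_last]

theorem not_isDecomposable_and_not_contains1Dash32_iff (π : Perm (Fin (m + 1))) (hm : 0 < m) :
    (¬π.IsDecomposable ∧ ¬π.Contains1Dash32) ↔ (¬π.Contains1Dash32 ∧ π (last m) ≠ last m) :=
  ⟨fun ⟨hind, hav⟩ => ⟨hav, fun h => hind (isDecomposable_of_apply_last_eq_last hm h)⟩,
    fun ⟨hav, h⟩ => ⟨fun hd => hav (contains1Dash32_of_isDecomposable hd h), hav⟩⟩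

theorem contains1Dash32_of_apply_last_lt_apply_castSucc_last {π : Perm (Fin (m + 2))}
    (hdesc : π (last (m + 1)) < π (last m).castSucc) (h0 : π (last (m + 1)) ≠ 0) :
    π.Contains1Dash32 := by
  have hπa : π (π.symm 0) = 0 := π.apply_symm_apply 0
  have ha_last : π.symm 0 ≠ last (m + 1) := fun ha => h0 (ha ▸ hπa)
  have ha_pred : π.symm 0 ≠ (last m).castSucc := fun ha => by
    rw [ha] at hπa
    exact (Fin.not_lt_zero _) (hπa ▸ hdesc)
  refine ⟨π.symm 0, (last m).castSucc, last (m + 1), ?_, rfl, ?_, hdesc⟩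
  · have := (π.symm 0).isLt
    simp only [ne_eq, Fin.ext_iff, val_last, val_castSucc] at ha_last ha_pred
    rw [Fin.lt_def, val_castSucc, val_last]
    omega
  · rwa [hπa, Fin.pos_iff_ne_zero]

theorem not_contains1Dash32_and_rise_iff (π : Perm (Fin (m + 2))) :
    (¬π.Contains1Dash32 ∧ π (last m).castSucc < π (last (m + 1))) ↔
      (¬π.Contains1Dash32 ∧ π (last (m + 1)) ≠ 0) := by
  refine ⟨fun ⟨hav, hrise⟩ => ⟨hav, fun h0 => Fin.not_lt_zero _ (h0 ▸ hrise)⟩,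
    fun ⟨hav, h0⟩ => ⟨hav, ?_⟩⟩
  have hne : π (last m).castSucc ≠ π (last (m + 1)) :=
    π.injective.ne (castSucc_lt_last _).ne
  exact hne.lt_of_le (not_lt.mp fun hdesc =>
    hav (contains1Dash32_of_apply_last_lt_apply_castSucc_last hdesc h0))

theorem finRotate_lt_finRotate_iff {u v : Fin (m + 1)} (hu : u ≠ last m) (hv : v ≠ last m) :
    finRotate (m + 1) u < finRotate (m + 1) v ↔ u < v := by
  rw [Fin.lt_def, Fin.lt_def, coe_finRotate_of_ne_last hu, coe_finRotate_of_ne_last hv]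
  omega

/-- Rotation preserves the order of all values but the maximum. Here the maximum is the last
entry, which could only play the `2` of an occurrence; it cannot, being the maximum before the
rotation and the minimum after it. -/
theorem contains1Dash32_finRotate_mul_iff {π : Perm (Fin (m + 1))} (h : π (last m) = last m) :
    (finRotate (m + 1) * π).Contains1Dash32 ↔ π.Contains1Dash32 := by
  have hne : ∀ {a b : Fin (m + 1)}, a < b → π a ≠ last m :=
    fun hab => apply_ne_last_of_ne_last h (ne_last_of_lt hab)
  have hbc : ∀ {b c : Fin (m + 1)}, c.val = b.val + 1 → b < c :=
    fun hc => by rw [Fin.lt_def]; omega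
  constructor
  · rintro ⟨a, b, c, hab, hc, hac, hcb⟩
    have hc_last : π c ≠ last m := fun hπc => by
      rw [Perm.mul_apply, Perm.mul_apply, hπc, finRotate_last] at hac
      exact Fin.not_lt_zero _ hac
    simp only [Perm.mul_apply, finRotate_lt_finRotate_iff (hne hab) hc_last,
      finRotate_lt_finRotate_iff hc_last (hne (hbc hc))] at hac hcb
    exact ⟨a, b, c, hab, hc, hac, hcb⟩
  · rintro ⟨a, b, c, hab, hc, hac, hcb⟩
    have hc_last : π c ≠ last m := fun hπc => not_lt_of_ge (le_last _) (hπc ▸ hcb)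
    refine ⟨a, b, c, hab, hc, ?_, ?_⟩
    · rwa [Perm.mul_apply, Perm.mul_apply, finRotate_lt_finRotate_iff (hne hab) hc_last]
    · rwa [Perm.mul_apply, Perm.mul_apply,
        finRotate_lt_finRotate_iff hc_last (hne (hbc hc))]

theorem card_avoid1Dash32_apply_last_eq_last :
    Nat.card {π : Perm (Fin (m + 1)) // ¬π.Contains1Dash32 ∧ π (last m) = last m} =
      Nat.card {π : Perm (Fin (m + 1)) // ¬π.Contains1Dash32 ∧ π (last m) = 0} := by
  refine Nat.card_congr ((Equiv.mulLeft (finRotate (m + 1))).subtypeEquiv fun π => ?_)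
  rw [coe_mulLeft, Perm.mul_apply, ← finRotate_last, (finRotate _).injective.eq_iff]
  exact and_congr_left fun h => not_congr (contains1Dash32_finRotate_mul_iff h).symm

end Equiv.Perm

theorem Nat.card_and_ne_eq_of_card_and_eq {α β : Type*} [Finite α] (p : α → Prop) (f : α → β)
    {x y : β} (h : Nat.card {a // p a ∧ f a = x} = Nat.card {a // p a ∧ f a = y}) :
    Nat.card {a // p a ∧ f a ≠ x} = Nat.card {a // p a ∧ f a ≠ y} := by
  have split : ∀ z, Nat.card {a // p a ∧ f a = z} + Nat.card {a // p a ∧ f a ≠ z} =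
      Nat.card {a // p a} := fun z => by
    classical
    rw [← Nat.card_congr (Equiv.subtypeSubtypeEquivSubtypeInter p (f · = z)),
      ← Nat.card_congr (Equiv.subtypeSubtypeEquivSubtypeInter p (f · ≠ z)), ← Nat.card_sum,
      Nat.card_congr (Equiv.sumCompl _)]
  have hx := split x
  have hy := split y
  omega

/-- For n ≥ 2, the number of indecomposable permutations of {1,...,n}
avoiding the vincular pattern 1-32 equals the number of permutations of {1,...,n}
avoiding 1-32 that end with a rise. -/
theorem stmt15 (n : ℕ) (hn : 2 ≤ n) :
    Nat.card {π : Equiv.Perm (Fin n) //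
      (¬ ∃ i : ℕ, 0 < i ∧ i < n ∧ ∀ a : Fin n, a.val < i ↔ (π a).val < i) ∧
      ¬ ∃ a b c : Fin n, a < b ∧ c.val = b.val + 1 ∧ π a < π c ∧ π c < π b} =
    Nat.card {π : Equiv.Perm (Fin n) //
      (¬ ∃ a b c : Fin n, a < b ∧ c.val = b.val + 1 ∧ π a < π c ∧ π c < π b) ∧
      π ⟨n - 2, by omega⟩ < π ⟨n - 1, by omega⟩} := by
  obtain ⟨m, rfl⟩ := Nat.exists_eq_add_of_le' hn
  open Equiv Equiv.Perm in
  calc _ = Nat.card {π : Perm (Fin (m + 2)) //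
          ¬π.Contains1Dash32 ∧ π (last (m + 1)) ≠ last (m + 1)} :=
        Nat.card_congr (Equiv.subtypeEquivRight fun π =>
          not_isDecomposable_and_not_contains1Dash32_iff π m.succ_pos)
    _ = Nat.card {π : Perm (Fin (m + 2)) // ¬π.Contains1Dash32 ∧ π (last (m + 1)) ≠ 0} :=
        Nat.card_and_ne_eq_of_card_and_eq _ _ card_avoid1Dash32_apply_last_eq_last
    _ = _ := (Nat.card_congr (Equiv.subtypeEquivRight not_contains1Dash32_and_rise_iff)).symm
end
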